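/- Let (ξ_n) be a real random sequence adapted to a filtration (F_n). Set Δ_n = E(ξ_{n+1} − ξ_n | F_n) and Q_n = E((ξ_{n+1} − ξ_n)^2 | F_n). If Σ_n |Δ_n| < ∞ and Σ_n Q_n < ∞ almost surely, then ξ_n converges almost surely to a finite random variable. -/

import Mathlib

/-!
Write `ξ = M + A` (Doob decomposition), where `A n = ∑_{k<n} Δ k` converges wherever
`∑ |Δ k| < ∞`. The increments of the martingale `M` have conditional second moments
`Var(ξ (k+1) - ξ k | F k) ≤ Q k`, so the predictable quadratic variation `⟨M⟩` stays bounded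
almost surely. For a level `c`, the transform of `M` by the predictable indicators
`1{⟨M⟩ (k+1) ≤ c}` has orthogonal increments with total second moment at most `c`; being an
`L²`-bounded martingale it converges a.s., and on `{⟨M⟩ ≤ c}` it coincides with `M - M 0`.
-/

open MeasureTheory ProbabilityTheory Filter Finset

section QuadVar

variable {Ω : Type*} {m0 : MeasurableSpace Ω} {μ : Measure Ω} {ℱ : Filtration ℕ m0}
  {M : ℕ → Ω → ℝ}

lemma sum_range_ite_sum_range_succ_le {q : ℕ → ℝ} (hq : ∀ k, 0 ≤ q k) {c : ℝ} (hc : 0 ≤ c)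
    (n : ℕ) :
    ∑ k ∈ range n, (if ∑ j ∈ range (k + 1), q j ≤ c then q k else 0) ≤ c := by
  suffices h : ∑ k ∈ range n, (if ∑ j ∈ range (k + 1), q j ≤ c then q k else 0)
      ≤ min (∑ k ∈ range n, q k) c from h.trans (min_le_right _ _)
  induction n with
  | zero => simpa using hc
  | succ n ih =>
    rw [sum_range_succ, sum_range_succ]
    split_ifs with h
    · rw [le_min_iff] at ih ⊢
      exact ⟨by linarith [ih.1], by linarith [ih.1]⟩
    · exact (add_zero _).trans_le (ih.trans (min_le_min_right _ (by linarith [hq n])))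

lemma eLpNorm_one_le_of_integral_sq_le [IsFiniteMeasure μ] {f : Ω → ℝ} (hf : MemLp f 2 μ)
    {C : ℝ} (hC : ∫ ω, f ω ^ 2 ∂μ ≤ C) :
    eLpNorm f 1 μ ≤ ENNReal.ofReal (μ.real Set.univ + C) := by
  have hle : ∀ ω, ‖f ω‖ ≤ 1 + f ω ^ 2 := fun ω => by
    rw [Real.norm_eq_abs]; nlinarith [sq_abs (f ω), sq_nonneg (|f ω| - 1)]
  rw [eLpNorm_one_eq_lintegral_enorm,
    ← ofReal_integral_norm_eq_lintegral_enorm (hf.integrable one_le_two)]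
  refine ENNReal.ofReal_le_ofReal ?_
  calc ∫ ω, ‖f ω‖ ∂μ ≤ ∫ ω, 1 + f ω ^ 2 ∂μ :=
        integral_mono (hf.integrable one_le_two).norm
          ((integrable_const 1).add hf.integrable_sq) hle
    _ ≤ μ.real Set.univ + C := by
        rw [integral_add (integrable_const 1) hf.integrable_sq, integral_const, smul_eq_mul,
          mul_one]
        linarith

lemma condExp_sq_nonneg (f : Ω → ℝ) (m : MeasurableSpace Ω) : 0 ≤ᵐ[μ] μ[f ^ 2 | m] :=
  condExp_nonneg (ae_of_all _ fun ω => sq_nonneg (f ω))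

namespace MeasureTheory.Martingale

variable [SigmaFiniteFiltration μ ℱ]

lemma condExp_add_one_sub_ae_eq_zero (hM : Martingale M ℱ μ) (n : ℕ) :
    μ[M (n + 1) - M n | ℱ n] =ᵐ[μ] 0 := by
  filter_upwards [condExp_sub (hM.integrable (n + 1)) (hM.integrable n) (ℱ n),
    hM.condExp_ae_eq n.le_succ] with ω hsub hsucc
  rw [hsub, Pi.sub_apply, hsucc, condExp_of_stronglyMeasurable (ℱ.le n)
    (hM.stronglyAdapted n) (hM.integrable n), Pi.zero_apply, sub_self]

lemma integral_mul_add_one_sub_eq_zero (hM : Martingale M ℱ μ) (hL2 : ∀ n, MemLp (M n) 2 μ)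
    (n : ℕ) : ∫ ω, M n ω * (M (n + 1) ω - M n ω) ∂μ = 0 := by
  have hpull : μ[M n * (M (n + 1) - M n) | ℱ n] =ᵐ[μ] M n * μ[M (n + 1) - M n | ℱ n] :=
    condExp_mul_of_stronglyMeasurable_left (hM.stronglyAdapted n)
      ((hL2 n).integrable_mul ((hL2 (n + 1)).sub (hL2 n)))
      ((hM.integrable (n + 1)).sub (hM.integrable n))
  calc ∫ ω, M n ω * (M (n + 1) ω - M n ω) ∂μ
      = ∫ ω, (μ[M n * (M (n + 1) - M n) | ℱ n]) ω ∂μ := (integral_condExp (ℱ.le n)).symm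
    _ = 0 := by
      rw [integral_congr_ae (hpull.trans (hM.condExp_add_one_sub_ae_eq_zero n).mul_left)]
      simp

lemma integral_sq_eq_add_sum (hM : Martingale M ℱ μ) (hL2 : ∀ n, MemLp (M n) 2 μ) (n : ℕ) :
    ∫ ω, M n ω ^ 2 ∂μ =
      ∫ ω, M 0 ω ^ 2 ∂μ + ∑ k ∈ range n, ∫ ω, (M (k + 1) ω - M k ω) ^ 2 ∂μ := by
  induction n with
  | zero => simp
  | succ n ih =>
    have hsq : Integrable (fun ω => M n ω ^ 2) μ := (hL2 n).integrable_sq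
    have hcross : Integrable (fun ω => 2 * (M n ω * (M (n + 1) ω - M n ω))) μ :=
      ((hL2 n).integrable_mul ((hL2 (n + 1)).sub (hL2 n))).const_mul 2
    have hincr : Integrable (fun ω => (M (n + 1) ω - M n ω) ^ 2) μ :=
      ((hL2 (n + 1)).sub (hL2 n)).integrable_sq
    have hsum : Integrable (fun ω => M n ω ^ 2 + 2 * (M n ω * (M (n + 1) ω - M n ω))) μ :=
      hsq.add hcross
    calc ∫ ω, M (n + 1) ω ^ 2 ∂μ
        = ∫ ω, (M n ω ^ 2 + 2 * (M n ω * (M (n + 1) ω - M n ω)))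
            + (M (n + 1) ω - M n ω) ^ 2 ∂μ := by congr 1; ext ω; ring
      _ = ∫ ω, M n ω ^ 2 ∂μ + ∫ ω, (M (n + 1) ω - M n ω) ^ 2 ∂μ := by
        rw [integral_add hsum hincr, integral_add hsq hcross, integral_const_mul,
          hM.integral_mul_add_one_sub_eq_zero hL2, mul_zero, add_zero]
      _ = _ := by rw [ih, sum_range_succ, add_assoc]

end MeasureTheory.Martingale

lemma martingalePart_add_one_sub {f : ℕ → Ω → ℝ} (n : ℕ) :
    martingalePart f ℱ μ (n + 1) - martingalePart f ℱ μ n =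
      f (n + 1) - f n - μ[f (n + 1) - f n | ℱ n] := by
  simp only [martingalePart, predictablePart_add_one]
  abel

lemma ae_exists_tendsto_predictablePart {f Δ : ℕ → Ω → ℝ}
    (hΔ : ∀ n, Δ n =ᵐ[μ] μ[f (n + 1) - f n | ℱ n])
    (hsum : ∀ᵐ ω ∂μ, Summable fun n => |Δ n ω|) :
    ∀ᵐ ω ∂μ, ∃ L, Tendsto (fun n => predictablePart f ℱ μ n ω) atTop (nhds L) := by
  filter_upwards [ae_all_iff.2 hΔ, hsum] with ω hΔω hω
  refine ⟨∑' n, Δ n ω, ?_⟩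
  simp only [predictablePart, Finset.sum_apply, ← hΔω]
  exact hω.of_abs.hasSum.tendsto_sum_nat

noncomputable def predictableQuadVar (M : ℕ → Ω → ℝ) (ℱ : Filtration ℕ m0) (μ : Measure Ω) :
    ℕ → Ω → ℝ :=
  fun n => ∑ k ∈ range n, μ[(M (k + 1) - M k) ^ 2 | ℱ k]

/-- `M - M 0` stopped just before `⟨M⟩` exceeds `c`, written as a martingale transform so that
no stopping time is needed. -/
noncomputable def quadVarStopped (M : ℕ → Ω → ℝ) (ℱ : Filtration ℕ m0) (μ : Measure Ω)
    (c : ℝ) : ℕ → Ω → ℝ :=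
  fun n => ∑ k ∈ range n,
    {ω | predictableQuadVar M ℱ μ (k + 1) ω ≤ c}.indicator (M (k + 1) - M k)

lemma measurableSet_predictableQuadVar_add_one_le (c : ℝ) (n : ℕ) :
    MeasurableSet[ℱ n] {ω | predictableQuadVar M ℱ μ (n + 1) ω ≤ c} := by
  have : StronglyMeasurable[ℱ n] (predictableQuadVar M ℱ μ (n + 1)) :=
    Finset.stronglyMeasurable_sum _ fun k hk =>
      stronglyMeasurable_condExp.mono (ℱ.mono (Nat.lt_succ_iff.mp (mem_range.mp hk)))
  exact measurableSet_le this.measurable measurable_const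

lemma quadVarStopped_add_one_sub (c : ℝ) (n : ℕ) :
    quadVarStopped M ℱ μ c (n + 1) - quadVarStopped M ℱ μ c n =
      {ω | predictableQuadVar M ℱ μ (n + 1) ω ≤ c}.indicator (M (n + 1) - M n) :=
  sum_range_succ_sub_sum _

lemma quadVarStopped_apply_eq_sub {c : ℝ} {ω : Ω}
    (hω : ∀ n, predictableQuadVar M ℱ μ n ω ≤ c) (n : ℕ) :
    quadVarStopped M ℱ μ c n ω = M n ω - M 0 ω := by
  rw [quadVarStopped, Finset.sum_apply, ← sum_range_sub (fun k => M k ω) n]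
  exact sum_congr rfl fun k _ => Set.indicator_of_mem (s := {ω | _ ≤ c}) (hω (k + 1)) _

lemma sum_indicator_predictableQuadVar_le {c : ℝ} (hc : 0 ≤ c) (n : ℕ) :
    ∀ᵐ ω ∂μ, ∑ k ∈ range n, {ω | predictableQuadVar M ℱ μ (k + 1) ω ≤ c}.indicator
      (μ[(M (k + 1) - M k) ^ 2 | ℱ k]) ω ≤ c := by
  filter_upwards [ae_all_iff.2 fun k => condExp_sq_nonneg (M (k + 1) - M k) (ℱ k)] with ω hω
  simp only [Set.indicator_apply, Set.mem_ofPred_eq, predictableQuadVar, Finset.sum_apply]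
  exact sum_range_ite_sum_range_succ_le hω hc n

lemma memLp_quadVarStopped (hL2 : ∀ n, MemLp (M (n + 1) - M n) 2 μ) (c : ℝ) (n : ℕ) :
    MemLp (quadVarStopped M ℱ μ c n) 2 μ :=
  memLp_finsetSum' _ fun k _ =>
    (hL2 k).indicator (ℱ.le k _ (measurableSet_predictableQuadVar_add_one_le c k))

variable [IsFiniteMeasure μ]

lemma martingale_quadVarStopped (hM : Martingale M ℱ μ) (c : ℝ) :
    Martingale (quadVarStopped M ℱ μ c) ℱ μ := by
  have hincr : ∀ k, Integrable (M (k + 1) - M k) μ := fun k =>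
    (hM.integrable (k + 1)).sub (hM.integrable k)
  have hA := measurableSet_predictableQuadVar_add_one_le (M := M) (ℱ := ℱ) (μ := μ) c
  refine martingale_of_condExp_sub_eq_zero_nat (fun n => ?_)
    (fun n => integrable_finsetSum' _ fun k _ => (hincr k).indicator (ℱ.le k _ (hA k)))
    fun n => ?_
  · refine Finset.stronglyMeasurable_sum _ fun k hk => ?_
    exact (((hM.stronglyAdapted (k + 1)).sub
      ((hM.stronglyAdapted k).mono (ℱ.mono k.le_succ))).indicator
      (ℱ.mono k.le_succ _ (hA k))).mono (ℱ.mono (mem_range.mp hk))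
  · rw [quadVarStopped_add_one_sub]
    filter_upwards [condExp_indicator (hincr n) (hA n), hM.condExp_add_one_sub_ae_eq_zero n]
      with ω hind hzero
    rw [hind, Pi.zero_apply]
    exact Set.indicator_apply_eq_zero.mpr fun _ => hzero

lemma integral_sq_quadVarStopped_le (hM : Martingale M ℱ μ)
    (hL2 : ∀ n, MemLp (M (n + 1) - M n) 2 μ) {c : ℝ} (hc : 0 ≤ c) (n : ℕ) :
    ∫ ω, quadVarStopped M ℱ μ c n ω ^ 2 ∂μ ≤ μ.real Set.univ * c := by
  set A : ℕ → Set Ω := fun k => {ω | predictableQuadVar M ℱ μ (k + 1) ω ≤ c}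
  set V : ℕ → Ω → ℝ := fun k => μ[(M (k + 1) - M k) ^ 2 | ℱ k]
  have hA : ∀ k, MeasurableSet[ℱ k] (A k) := measurableSet_predictableQuadVar_add_one_le c
  have hincr : ∀ k, ∫ ω, (quadVarStopped M ℱ μ c (k + 1) ω - quadVarStopped M ℱ μ c k ω) ^ 2 ∂μ
      = ∫ ω, (A k).indicator (V k) ω ∂μ := by
    intro k
    calc _ = ∫ ω, (A k).indicator ((M (k + 1) - M k) ^ 2) ω ∂μ := by
          congr 1; ext ω
          rw [← Pi.sub_apply, quadVarStopped_add_one_sub, Set.indicator_apply,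
            Set.indicator_apply]
          split_ifs <;> simp
      _ = ∫ ω, (A k).indicator (V k) ω ∂μ := by
          rw [integral_indicator (ℱ.le k _ (hA k)), integral_indicator (ℱ.le k _ (hA k))]
          exact (setIntegral_condExp (ℱ.le k) (hL2 k).integrable_sq (hA k)).symm
  have hint : ∀ k, Integrable ((A k).indicator (V k)) μ := fun k =>
    integrable_condExp.indicator (ℱ.le k _ (hA k))
  rw [(martingale_quadVarStopped hM c).integral_sq_eq_add_sum (memLp_quadVarStopped hL2 c) n,
    show ∫ ω, quadVarStopped M ℱ μ c 0 ω ^ 2 ∂μ = 0 by simp [quadVarStopped], zero_add,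
    sum_congr rfl fun k _ => hincr k, ← integral_finsetSum _ fun k _ => hint k]
  calc ∫ ω, ∑ k ∈ range n, (A k).indicator (V k) ω ∂μ ≤ ∫ _, c ∂μ :=
        integral_mono_ae (integrable_finsetSum _ fun k _ => hint k) (integrable_const c)
          (sum_indicator_predictableQuadVar_le hc n)
    _ = μ.real Set.univ * c := by rw [integral_const, smul_eq_mul]

lemma ae_exists_tendsto_quadVarStopped (hM : Martingale M ℱ μ)
    (hL2 : ∀ n, MemLp (M (n + 1) - M n) 2 μ) {c : ℝ} (hc : 0 ≤ c) :
    ∀ᵐ ω ∂μ, ∃ L, Tendsto (fun n => quadVarStopped M ℱ μ c n ω) atTop (nhds L) :=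
  (martingale_quadVarStopped hM c).submartingale.exists_ae_tendsto_of_bdd fun n =>
    eLpNorm_one_le_of_integral_sq_le (memLp_quadVarStopped hL2 c n)
      (integral_sq_quadVarStopped_le hM hL2 hc n)

theorem MeasureTheory.Martingale.ae_exists_tendsto_of_summable_condExp_sq
    (hM : Martingale M ℱ μ) (hL2 : ∀ n, MemLp (M (n + 1) - M n) 2 μ)
    (hsum : ∀ᵐ ω ∂μ, Summable fun n => μ[(M (n + 1) - M n) ^ 2 | ℱ n] ω) :
    ∀ᵐ ω ∂μ, ∃ L, Tendsto (fun n => M n ω) atTop (nhds L) := by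
  have hloc : ∀ᵐ ω ∂μ, ∀ c : ℕ,
      ∃ L, Tendsto (fun n => quadVarStopped M ℱ μ c n ω) atTop (nhds L) :=
    ae_all_iff.2 fun c => ae_exists_tendsto_quadVarStopped hM hL2 c.cast_nonneg
  filter_upwards [hloc, ae_all_iff.2 fun n => condExp_sq_nonneg (M (n + 1) - M n) (ℱ n), hsum]
    with ω hconv hV hVsum
  obtain ⟨c, hc⟩ := exists_nat_ge (∑' n, μ[(M (n + 1) - M n) ^ 2 | ℱ n] ω)
  have hbdd : ∀ n, predictableQuadVar M ℱ μ n ω ≤ c := fun n => by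
    rw [predictableQuadVar, Finset.sum_apply]
    exact (hVsum.sum_le_tsum _ fun k _ => hV k).trans hc
  obtain ⟨L, hL⟩ := hconv c
  refine ⟨L + M 0 ω, ?_⟩
  simpa only [quadVarStopped_apply_eq_sub hbdd, sub_add_cancel] using hL.add_const (M 0 ω)

end QuadVar

/-- Pemantle–Volkov, Lemma 3.2. Let `(ξ n)` be a real random sequence
adapted to a filtration `(F n)`.  Set `Δ n = E(ξ (n+1) - ξ n | F n)` and
`Q n = E((ξ (n+1) - ξ n)^2 | F n)`.  If `∑ n, |Δ n| < ∞` and `∑ n, Q n < ∞` almost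
surely, then `ξ n` converges almost surely to a finite random variable. -/
theorem converges_of_summable_conditional_increments
    {Ω : Type} {m : MeasurableSpace Ω} {μ : Measure Ω} [IsProbabilityMeasure μ]
    (F : Filtration ℕ m) (ξ Δ Q : ℕ → Ω → ℝ)
    (hadapted : Adapted F ξ)
    (hint : ∀ n, Integrable (ξ n) μ)
    (hsq : ∀ n, Integrable (fun ω => (ξ (n + 1) ω - ξ n ω) ^ 2) μ)
    (hΔ : ∀ n, Δ n =ᵐ[μ] μ[fun ω => ξ (n + 1) ω - ξ n ω | F n])
    (hQ : ∀ n, Q n =ᵐ[μ] μ[fun ω => (ξ (n + 1) ω - ξ n ω) ^ 2 | F n])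
    (hΔ_sum : ∀ᵐ ω ∂μ, Summable fun n => |Δ n ω|)
    (hQ_sum : ∀ᵐ ω ∂μ, Summable fun n => Q n ω) :
    ∀ᵐ ω ∂μ, ∃ L : ℝ, Tendsto (fun n => ξ n ω) atTop (nhds L) := by
  set M := martingalePart ξ F μ
  have hX : ∀ n, MemLp (ξ (n + 1) - ξ n) 2 μ := fun n =>
    (memLp_two_iff_integrable_sq ((hint (n + 1)).sub (hint n)).aestronglyMeasurable).2 (hsq n)
  have hML2 : ∀ n, MemLp (M (n + 1) - M n) 2 μ := fun n => by
    rw [martingalePart_add_one_sub]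
    exact (hX n).sub ((hX n).condExp one_le_two)
  -- the conditional second moment of an increment of `M` is a conditional variance
  have hVQ : ∀ n, μ[(M (n + 1) - M n) ^ 2 | F n] ≤ᵐ[μ] Q n := fun n => by
    rw [martingalePart_add_one_sub]
    exact (condVar_ae_le_condExp_sq (F.le n) (hX n)).trans_eq (hQ n).symm
  have hVsum : ∀ᵐ ω ∂μ, Summable fun n => μ[(M (n + 1) - M n) ^ 2 | F n] ω := by
    filter_upwards [hQ_sum, ae_all_iff.2 hVQ, ae_all_iff.2 fun n => condExp_sq_nonneg _ (F n)]
      with ω hQω hle h0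
    exact hQω.of_nonneg_of_le h0 hle
  have hM : Martingale M F μ := martingale_martingalePart hadapted.stronglyAdapted hint
  filter_upwards [hM.ae_exists_tendsto_of_summable_condExp_sq hML2 hVsum,
    ae_exists_tendsto_predictablePart hΔ hΔ_sum] with ω ⟨L₁, h₁⟩ ⟨L₂, h₂⟩
  exact ⟨L₁ + L₂, (h₁.add h₂).congr fun n =>
    congrFun (congrFun (martingalePart_add_predictablePart F μ ξ) n) ω⟩
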